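/- arXiv:1510.03046 — 3 statements merged into one kernel-verified Lean document; each statement's English description precedes it below -/
import Mathlib

section
/- Define g(k) = ((1+c)²/4)·cos 3k + (s²/2)·cos 2k + ((1-c)(3+c)/4)·cos k − s²/2 with c = cos θ, s = sin θ. Then g(k) ∈ [-1, 1] for all real k, and g(0) = 1. -/
noncomputable def g (θ k : ℝ) : ℝ :=
  ((1 + Real.cos θ)^2/4) * Real.cos (3*k) + (Real.sin θ^2/2) * Real.cos (2*k)
    + ((1 - Real.cos θ) * (3 + Real.cos θ)/4) * Real.cos k - Real.sin θ^2/2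

theorem g_range (θ : ℝ) :
    (∀ k : ℝ, g θ k ∈ Set.Icc (-1 : ℝ) 1) ∧ g θ 0 = 1 := by
  constructor
  · intro k
    set c := Real.cos θ with hc
    set x := Real.cos k with hx
    have hkey : g θ k = (1+c)^2*x^3 + (1-c^2)*x^2 - (2*c + c^2)*x - (1-c^2) := by
      rw [g, Real.cos_three_mul, Real.cos_two_mul, Real.sin_sq]
      ring
    have hx1 : -1 ≤ x := Real.neg_one_le_cos k
    have hx2 : x ≤ 1 := Real.cos_le_one k
    have hc1 : -1 ≤ c := Real.neg_one_le_cos θ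
    have hc2 : c ≤ 1 := Real.cos_le_one θ
    have h1 : 1 - g θ k = (1-x)*(((1+c)*x+1)^2 + (1-c^2)) := by rw [hkey]; ring
    have h2 : g θ k + 1 = (1+x)*((1+c)*x - c)^2 := by rw [hkey]; ring
    constructor
    · nlinarith [sq_nonneg ((1+c)*x - c)]
    · nlinarith [sq_nonneg ((1+c)*x+1), mul_nonneg (by linarith : (0:ℝ) ≤ 1-x) (by nlinarith [sq_nonneg ((1+c)*x+1)] : (0:ℝ) ≤ ((1+c)*x+1)^2 + (1-c^2))]
  · simp [g]
    ring
end

section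
/- Define h(k) = [2 + c + 3(1+c)cos k] / [3√((1+(1+c)cos k)² + 1 − c²)] for c ∈ (-1,1). Then for all real k, |h(k)| ≤ √(5+4c)/3. -/
theorem group_velocity_bound (c : ℝ) (hc : c ∈ Set.Ioo (-1 : ℝ) 1) (k : ℝ) :
    |(2 + c + 3*(1 + c)*Real.cos k) /
      (3 * Real.sqrt ((1 + (1 + c)*Real.cos k)^2 + 1 - c^2))|
      ≤ Real.sqrt (5 + 4*c)/3 := by
  obtain ⟨hc1, hc2⟩ := hc
  set s := Real.cos k with hsdef
  have hs1 : -1 ≤ s := Real.neg_one_le_cos k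
  have hs2 : s ≤ 1 := Real.cos_le_one k
  have hD : (0:ℝ) < (1 + (1 + c)*s)^2 + 1 - c^2 := by
    nlinarith [sq_nonneg (1+(1+c)*s)]
  have hsq : (0:ℝ) < Real.sqrt ((1 + (1 + c)*s)^2 + 1 - c^2) := Real.sqrt_pos.mpr hD
  rw [abs_div, div_le_div_iff₀ (by positivity) (by norm_num : (0:ℝ) < 3)]
  have h3 : |3 * Real.sqrt ((1 + (1 + c)*s)^2 + 1 - c^2)|
      = 3 * Real.sqrt ((1 + (1 + c)*s)^2 + 1 - c^2) := abs_of_pos (by positivity)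
  rw [h3]
  have hkey : |2 + c + 3*(1 + c)*s| ≤ Real.sqrt ((5 + 4*c) * ((1 + (1 + c)*s)^2 + 1 - c^2)) := by
    apply Real.abs_le_sqrt
    nlinarith [mul_nonneg (mul_nonneg (mul_nonneg (by linarith : (0:ℝ) ≤ 1 - c)
      (by linarith : (0:ℝ) ≤ 1 + c)) (by linarith : (0:ℝ) ≤ 1 - s))
      (by nlinarith : (0:ℝ) ≤ 4*(1+c)*s + 4*c + 6)]
  have hmul : Real.sqrt ((5 + 4*c) * ((1 + (1 + c)*s)^2 + 1 - c^2))
      = Real.sqrt (5 + 4*c) * Real.sqrt ((1 + (1 + c)*s)^2 + 1 - c^2) :=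
    Real.sqrt_mul (by linarith) _
  rw [hmul] at hkey
  nlinarith [hkey, Real.sqrt_nonneg (5+4*c), hsq, abs_nonneg (2 + c + 3*(1 + c)*s)]
end

section
/- Suppose α, β, γ ∈ ℂ and c ∈ (-1,1), s = √(1−c²) > 0, satisfy the system: √2·s·α + (1+c)β = 0, √2·c·α − s·β = 0, 2√2(1−c)s·α + (1−c)(1+3c)β − √2(1+c)s·γ = 0, c·s·α + √2(1+c²)β + c·s·γ = 0, −√2(1+c)s·α + (1−c)(1+3c)β + 2√2(1−c)s·γ = 0, −s·β + √2·c·γ = 0, (1+c)β + √2·s·γ = 0. Then α = β = γ = 0; in particular there is no solution with |α|² + |β|² + |γ|² = 1. -/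
/-!
The first two equations already force `α = β = 0`: their coefficient determinant is
`-√2 s² - √2 c (1 + c) = -√2 (1 + c)`, using `s² = 1 - c²`, and this is nonzero for `c > -1`.
The last equation then reduces to `√2 s γ = 0` with `s > 0`.
-/

theorem eq_zero_of_det_ne_zero {R : Type*} [CommRing R] [NoZeroDivisors R] {a b c d x y : R}
    (hdet : a * d - b * c ≠ 0) (h₁ : a * x + b * y = 0) (h₂ : c * x + d * y = 0) :
    x = 0 ∧ y = 0 := by
  have hx : (a * d - b * c) * x = 0 := by linear_combination d * h₁ - b * h₂
  have hy : (a * d - b * c) * y = 0 := by linear_combination a * h₂ - c * h₁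
  exact ⟨(mul_eq_zero.mp hx).resolve_left hdet, (mul_eq_zero.mp hy).resolve_left hdet⟩

theorem delocalization_system_general (c s : ℝ) (hc : c ∈ Set.Ioo (-1 : ℝ) 1)
    (hs : s = Real.sqrt (1 - c^2)) (α β γ : ℂ)
    (e1 : (Real.sqrt 2 * s : ℝ) * α + ((1 + c : ℝ)) * β = 0)
    (e2 : (Real.sqrt 2 * c : ℝ) * α - (s : ℝ) * β = 0)
    (e7 : ((1 + c : ℝ)) * β + (Real.sqrt 2 * s : ℝ) * γ = 0) :
    α = 0 ∧ β = 0 ∧ γ = 0 ∧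
      ¬ (‖α‖^2 + ‖β‖^2 + ‖γ‖^2 = 1) := by
  obtain ⟨hc₁, hc₂⟩ := hc
  have hs_sq : s ^ 2 = 1 - c ^ 2 := by rw [hs]; exact Real.sq_sqrt (by nlinarith)
  have hs_pos : 0 < s := by rw [hs]; exact Real.sqrt_pos.mpr (by nlinarith)
  have hsqrt2 : Real.sqrt 2 ≠ 0 := by positivity
  have hdet : (Real.sqrt 2 * s : ℝ) * (-s : ℝ) - (1 + c : ℝ) * (Real.sqrt 2 * c : ℝ) ≠ (0 : ℂ) := by
    have hreal : Real.sqrt 2 * s * -s - (1 + c) * (Real.sqrt 2 * c) = -Real.sqrt 2 * (1 + c) := by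
      linear_combination (-Real.sqrt 2) * hs_sq
    rw [← Complex.ofReal_mul, ← Complex.ofReal_mul, ← Complex.ofReal_sub, hreal]
    exact_mod_cast mul_ne_zero (neg_ne_zero.mpr hsqrt2) (by linarith)
  obtain ⟨rfl, rfl⟩ := eq_zero_of_det_ne_zero hdet e1 (by push_cast at e2 ⊢; linear_combination e2)
  have hγ : γ = 0 := by
    have hcoef : ((Real.sqrt 2 * s : ℝ) : ℂ) ≠ 0 := by exact_mod_cast mul_ne_zero hsqrt2 hs_pos.ne'
    rw [mul_zero, zero_add] at e7
    exact (mul_eq_zero.mp e7).resolve_left hcoef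
  exact ⟨rfl, rfl, hγ, by simp [hγ]⟩

theorem delocalization_system (c s : ℝ) (hc : c ∈ Set.Ioo (-1 : ℝ) 1)
    (hs : s = Real.sqrt (1 - c^2)) (α β γ : ℂ)
    (e1 : (Real.sqrt 2 * s : ℝ) * α + ((1 + c : ℝ)) * β = 0)
    (e2 : (Real.sqrt 2 * c : ℝ) * α - (s : ℝ) * β = 0)
    (e3 : (2 * Real.sqrt 2 * (1 - c) * s : ℝ) * α + ((1 - c) * (1 + 3*c) : ℝ) * β
            - (Real.sqrt 2 * (1 + c) * s : ℝ) * γ = 0)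
    (e4 : (c * s : ℝ) * α + (Real.sqrt 2 * (1 + c^2) : ℝ) * β + (c * s : ℝ) * γ = 0)
    (e5 : -(Real.sqrt 2 * (1 + c) * s : ℝ) * α + ((1 - c) * (1 + 3*c) : ℝ) * β
            + (2 * Real.sqrt 2 * (1 - c) * s : ℝ) * γ = 0)
    (e6 : -(s : ℝ) * β + (Real.sqrt 2 * c : ℝ) * γ = 0)
    (e7 : ((1 + c : ℝ)) * β + (Real.sqrt 2 * s : ℝ) * γ = 0) :
    α = 0 ∧ β = 0 ∧ γ = 0 ∧
      ¬ (‖α‖^2 + ‖β‖^2 + ‖γ‖^2 = 1) :=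
  delocalization_system_general c s hc hs α β γ e1 e2 e7
end
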